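/- Tail decomposition identity (equation (eq:asympp)). Assume E[max(X_1,0)] < ∞ and E[X_1] < 0 (mean possibly −∞), so that M = sup_{s≥0} X_s is finite almost surely, and write F(y) = P(M > y). Then for every t ≥ 0 and every x ≥ 0, P(\overline U^*_t > x) = P(\overline U_t > x) + E[ F(x − U_t) · 1{\overline U_t ≤ x} ]; equivalently, P(\overline U^*_t > x) = P(\overline U_t > x) + ∫_{[0,x]} P(M > x − z) P(U_t ∈ dz, \overline U_t ≤ x). -/

import Mathlib

open MeasureTheory ProbabilityTheory Filter Set

noncomputable section

variable {Ω : Type*} [MeasurableSpace Ω]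

/-- Running supremum of the process on `[0, t]`. -/
def ovX (X : ℝ → Ω → ℝ) (t : ℝ) (ω : Ω) : ℝ := sSup ((fun s => X s ω) '' Icc 0 t)

/-- Running infimum of the process on `[0, t]`. -/
def unX (X : ℝ → Ω → ℝ) (t : ℝ) (ω : Ω) : ℝ := sInf ((fun s => X s ω) '' Icc 0 t)

/-- Drawup `U_t = X_t - inf_{0≤s≤t} X_s`. -/
def drawup (X : ℝ → Ω → ℝ) (t : ℝ) (ω : Ω) : ℝ := X t ω - unX X t ω

/-- Drawdown `D_t = sup_{0≤s≤t} X_s - X_t`. -/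
def drawdown (X : ℝ → Ω → ℝ) (t : ℝ) (ω : Ω) : ℝ := ovX X t ω - X t ω

/-- Running supremum of the drawup. -/
def ovU (X : ℝ → Ω → ℝ) (t : ℝ) (ω : Ω) : ℝ := sSup ((fun u => drawup X u ω) '' Icc 0 t)

/-- Running supremum of the drawdown. -/
def ovD (X : ℝ → Ω → ℝ) (t : ℝ) (ω : Ω) : ℝ := sSup ((fun u => drawdown X u ω) '' Icc 0 t)

/-- Future drawup `U^*_{t,s} = sup_{t ≤ u < t+s} (X_u - X_t)`. -/
def futDrawup (X : ℝ → Ω → ℝ) (t s : ℝ) (ω : Ω) : ℝ :=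
  sSup ((fun u => X u ω - X t ω) '' Ico t (t + s))

/-- Future drawdown `D^*_{t,s} = inf_{t ≤ u < t+s} (X_u - X_t)`. -/
def futDrawdown (X : ℝ → Ω → ℝ) (t s : ℝ) (ω : Ω) : ℝ :=
  sInf ((fun u => X u ω - X t ω) '' Ico t (t + s))

/-- `\overline U^*_{t,s} = sup_{0≤u≤t} U^*_{u,s}`. -/
def ovUStar (X : ℝ → Ω → ℝ) (t s : ℝ) (ω : Ω) : ℝ :=
  sSup ((fun u => futDrawup X u s ω) '' Icc 0 t)

/-- `\underline D^*_{t,s} = inf_{0≤u≤t} D^*_{u,s}`. -/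
def unDStar (X : ℝ → Ω → ℝ) (t s : ℝ) (ω : Ω) : ℝ :=
  sInf ((fun u => futDrawdown X u s ω) '' Icc 0 t)

/-- `sup_{v ≥ u} (X_v - X_u)` as an extended real number. -/
def futSupE (X : ℝ → Ω → ℝ) (u : ℝ) (ω : Ω) : EReal :=
  ⨆ v : {v : ℝ // u ≤ v}, ((X v ω - X u ω : ℝ) : EReal)

/-- `inf_{v ≥ u} (X_v - X_u)` as an extended real number. -/
def futInfE (X : ℝ → Ω → ℝ) (u : ℝ) (ω : Ω) : EReal :=
  ⨅ v : {v : ℝ // u ≤ v}, ((X v ω - X u ω : ℝ) : EReal)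

/-- Infinite-horizon `\overline U^*_t = sup_{0≤u≤t} sup_{v≥u}(X_v - X_u)`. -/
def ovUStarInf (X : ℝ → Ω → ℝ) (t : ℝ) (ω : Ω) : EReal :=
  ⨆ u : Icc (0:ℝ) t, futSupE X u ω

/-- Infinite-horizon `\underline U^*_t = inf_{0≤u≤t} sup_{v≥u}(X_v - X_u)`. -/
def unUStarInf (X : ℝ → Ω → ℝ) (t : ℝ) (ω : Ω) : EReal :=
  ⨅ u : Icc (0:ℝ) t, futSupE X u ω

/-- Infinite-horizon `\overline D^*_t = sup_{0≤u≤t} inf_{v≥u}(X_v - X_u)`. -/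
def ovDStarInf (X : ℝ → Ω → ℝ) (t : ℝ) (ω : Ω) : EReal :=
  ⨆ u : Icc (0:ℝ) t, futInfE X u ω

/-- Infinite-horizon `\underline D^*_t = inf_{0≤u≤t} inf_{v≥u}(X_v - X_u)`. -/
def unDStarInf (X : ℝ → Ω → ℝ) (t : ℝ) (ω : Ω) : EReal :=
  ⨅ u : Icc (0:ℝ) t, futInfE X u ω

/-- All-time supremum `M = sup_{s ≥ 0} X_s` as an extended real number. -/
def MSup (X : ℝ → Ω → ℝ) (ω : Ω) : EReal := ⨆ s : {s : ℝ // 0 ≤ s}, ((X s ω : ℝ) : EReal)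

/-- All-time infimum `I = inf_{s ≥ 0} X_s` as an extended real number. -/
def IInf (X : ℝ → Ω → ℝ) (ω : Ω) : EReal := ⨅ s : {s : ℝ // 0 ≤ s}, ((X s ω : ℝ) : EReal)

/-- A (real-valued) Lévy process: càdlàg paths started at `0`, with stationary
increments that are independent of the past. -/
structure IsLevyProcess (P : Measure Ω) (X : ℝ → Ω → ℝ) : Prop where
  measurable : ∀ t : ℝ, Measurable (X t)
  init : ∀ ω, X 0 ω = 0
  right_cont : ∀ ω, ∀ t : ℝ, 0 ≤ t → ContinuousWithinAt (fun u => X u ω) (Ici t) t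
  left_lim : ∀ ω, ∀ t : ℝ, 0 < t → ∃ l : ℝ, Tendsto (fun u => X u ω) (nhdsWithin t (Iio t)) (nhds l)
  indep_incr : ∀ t : ℝ, 0 ≤ t →
    IndepFun (fun ω => (fun s : ℝ => X (t + max s 0) ω - X t ω))
      (fun ω => (fun u : Icc (0:ℝ) t => X u ω)) P
  stat_incr : ∀ t : ℝ, 0 ≤ t →
    Measure.map (fun ω => (fun s : ℝ => X (t + max s 0) ω - X t ω)) P
      = Measure.map (fun ω => (fun s : ℝ => X (max s 0) ω)) P

/-- An exponential random variable of rate `q`, independent of the whole path of `X`. -/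
structure IsExpIndep (P : Measure Ω) (X : ℝ → Ω → ℝ) (q : ℝ) (e : Ω → ℝ) : Prop where
  meas : Measurable e
  nonneg : ∀ ω, 0 ≤ e ω
  law : ∀ x : ℝ, 0 ≤ x → P {ω | x < e ω} = ENNReal.ofReal (Real.exp (-q * x))
  indep : IndepFun e (fun ω => (fun s : {s : ℝ // 0 ≤ s} => X s ω)) P

/-- Cramér's condition with exponent `γ`. -/
structure CramerCond (P : Measure Ω) (X : ℝ → Ω → ℝ) (γ : ℝ) : Prop where
  gamma_pos : 0 < γ
  int_exp : Integrable (fun ω => Real.exp (γ * X 1 ω)) P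
  exp_eq_one : ∫ ω, Real.exp (γ * X 1 ω) ∂P = 1
  int_X1 : Integrable (X 1) P
  mean_neg : ∫ ω, X 1 ω ∂P < 0
  int_exp_abs : Integrable (fun ω => Real.exp (γ * X 1 ω) * |X 1 ω|) P

open Topology

/-!
Pathwise, an increment `X_v - X_u` with `u ≤ t ≤ v` splits as `(X_t - X_u) + (X_v - X_t)`, while one
with `v ≤ t` is at most `\overline U_t`. Hence `\overline U^*_t > x` iff `\overline U_t > x` or
`U_t + sup_{v ≥ t} (X_v - X_t) > x`. The pair `(U_t, \overline U_t)` is a functional of the path on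
`[0, t]`, and `sup_{v ≥ t} (X_v - X_t)` a functional of the increments after `t`; so the two are
independent and the latter is distributed as `M`, and conditioning on the former gives the integral.
By right-continuity all these suprema may be taken over countably many times, which is what makes
them measurable functionals of the path.
-/

theorem iSup_ratCast_eq_iSup {α : Type*} [CompleteLinearOrder α] [TopologicalSpace α]
    [OrderClosedTopology α] {f : ℝ → α} (hf : ∀ s, ContinuousWithinAt f (Ici s) s) :
    ⨆ q : ℚ, f q = ⨆ s, f s := by
  refine le_antisymm (iSup_le fun q => le_iSup f q) (iSup_le fun s => ?_)
  have hs : s ∈ closure (Ioi s ∩ range ((↑) : ℚ → ℝ)) :=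
    closure_minimal (Rat.denseRange_cast.open_subset_closure_inter isOpen_Ioi) isClosed_closure
      (by rw [closure_Ioi]; exact mem_Ici.2 le_rfl)
  refine ContinuousWithinAt.closure_le hs ((hf s).mono fun _ hy => mem_Ici.2 hy.1.le)
    continuousWithinAt_const ?_
  rintro _ ⟨-, q, rfl⟩
  exact le_iSup (fun q : ℚ => f q) q

theorem ProbabilityTheory.IndepFun.of_measurable_comap {Ω β γ β' γ' : Type*}
    {_ : MeasurableSpace Ω} [mβ : MeasurableSpace β] [mγ : MeasurableSpace γ]
    [MeasurableSpace β'] [MeasurableSpace γ'] {μ : Measure Ω}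
    {f : Ω → β} {g : Ω → γ} {f' : Ω → β'} {g' : Ω → γ'} (h : IndepFun f g μ)
    (hf : Measurable[mβ.comap f] f') (hg : Measurable[mγ.comap g] g') : IndepFun f' g' μ := by
  rw [IndepFun_iff_Indep] at h ⊢
  exact indep_of_indep_of_le_right (indep_of_indep_of_le_left h hf.comap_le) hg.comap_le

theorem ProbabilityTheory.IndepFun.measure_mem_eq_lintegral {Ω α β : Type*}
    {_ : MeasurableSpace Ω} [MeasurableSpace α] [MeasurableSpace β] {μ : Measure Ω}
    [IsFiniteMeasure μ] {A : Ω → α} {B : Ω → β} (hA : Measurable A) (hB : Measurable B)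
    (hAB : IndepFun A B μ) {S : Set (α × β)} (hS : MeasurableSet S) :
    μ {ω | (A ω, B ω) ∈ S} = ∫⁻ ω, μ {ω' | (A ω, B ω') ∈ S} ∂μ := by
  have hmap : μ.map (fun ω => (A ω, B ω)) = (μ.map A).prod (μ.map B) :=
    (indepFun_iff_map_prod_eq_prod_map_map hA.aemeasurable hB.aemeasurable).1 hAB
  calc μ {ω | (A ω, B ω) ∈ S} = (μ.map (fun ω => (A ω, B ω))) S :=
        (Measure.map_apply (hA.prodMk hB) hS).symm
    _ = ∫⁻ a, μ.map B (Prod.mk a ⁻¹' S) ∂μ.map A := by rw [hmap, Measure.prod_apply hS]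
    _ = ∫⁻ ω, μ.map B (Prod.mk (A ω) ⁻¹' S) ∂μ :=
        lintegral_map (measurable_measure_prodMk_left hS) hA
    _ = ∫⁻ ω, μ {ω' | (A ω, B ω') ∈ S} ∂μ := by
        simp_rw [Measure.map_apply hB (measurable_prodMk_left hS)]; rfl

theorem isBounded_image_of_cadlag {g : ℝ → ℝ}
    (hr : ∀ s, 0 ≤ s → ContinuousWithinAt g (Ici s) s)
    (hl : ∀ s, 0 < s → ∃ l, Tendsto g (𝓝[<] s) (𝓝 l)) {K : Set ℝ} (hK : IsCompact K)
    (hK0 : K ⊆ Ici 0) : Bornology.IsBounded (g '' K) := by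
  refine hK.induction_on (p := fun S => Bornology.IsBounded (g '' S)) (by simp)
    (fun _ _ hst h => h.subset (image_mono hst))
    (fun _ _ hs ht => by rw [image_union]; exact hs.union ht) fun s hs => ?_
  have hs0 : 0 ≤ s := hK0 hs
  obtain ⟨W, hW, hWb⟩ : ∃ W ∈ 𝓝[<] s, Bornology.IsBounded (g '' (W ∩ K)) := by
    rcases hs0.eq_or_lt with rfl | hpos
    · refine ⟨Iio 0, self_mem_nhdsWithin, ?_⟩
      rw [show Iio (0 : ℝ) ∩ K = ∅ from
        eq_empty_of_forall_notMem fun y hy => not_le.2 hy.1 (mem_Ici.1 (hK0 hy.2))]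
      simp
    · obtain ⟨l, hl⟩ := hl s hpos
      exact ⟨_, hl (Metric.ball_mem_nhds l one_pos),
        Metric.isBounded_ball.subset
          ((image_mono inter_subset_left).trans (image_preimage_subset _ _))⟩
  have hV : g ⁻¹' Metric.ball (g s) 1 ∈ 𝓝[≥] s := hr s hs0 (Metric.ball_mem_nhds _ one_pos)
  have hWV : W ∪ g ⁻¹' Metric.ball (g s) 1 ∈ 𝓝 s := by
    rw [← nhdsLT_sup_nhdsGE]
    exact ⟨mem_of_superset hW subset_union_left, mem_of_superset hV subset_union_right⟩
  refine ⟨_, inter_mem_nhdsWithin K hWV,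
    (hWb.union (Metric.isBounded_ball (x := g s) (r := 1))).subset ?_⟩
  rintro _ ⟨y, ⟨hyK, hy | hy⟩, rfl⟩
  · exact Or.inl ⟨y, ⟨hy, hyK⟩, rfl⟩
  · exact Or.inr hy

-- `t` itself is included because right-continuity only approximates a time from the right.
def skeleton (t : ℝ) : Set ℝ := insert t (Icc 0 t ∩ range ((↑) : ℚ → ℝ))

theorem countable_skeleton (t : ℝ) : (skeleton t).Countable :=
  ((countable_range _).mono inter_subset_right).insert t

theorem self_mem_skeleton (t : ℝ) : t ∈ skeleton t := mem_insert t _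

theorem skeleton_subset_Icc {t : ℝ} (ht : 0 ≤ t) : skeleton t ⊆ Icc 0 t :=
  insert_subset ⟨ht, le_rfl⟩ inter_subset_left

theorem mem_closure_skeleton_inter_Icc {s w t : ℝ} (hs : 0 ≤ s) (hsw : s ≤ w)
    (hw : w ∈ skeleton t) : s ∈ closure (skeleton t ∩ Icc s w) := by
  rcases hsw.eq_or_lt with rfl | hsw
  · exact subset_closure ⟨hw, left_mem_Icc.2 le_rfl⟩
  have hwt : w ≤ t := by
    rcases hw with rfl | ⟨⟨-, h⟩, -⟩
    exacts [le_rfl, h]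
  have hsub : Ioo s w ∩ range ((↑) : ℚ → ℝ) ⊆ skeleton t ∩ Icc s w :=
    fun r ⟨⟨hsr, hrw⟩, hr⟩ => ⟨Or.inr ⟨⟨hs.trans hsr.le, hrw.le.trans hwt⟩, hr⟩, hsr.le, hrw.le⟩
  have hIcc : Icc s w ⊆ closure (Ioo s w ∩ range ((↑) : ℚ → ℝ)) := by
    rw [← closure_Ioo hsw.ne]
    exact closure_minimal (Rat.denseRange_cast.open_subset_closure_inter isOpen_Ioo)
      isClosed_closure
  exact closure_mono hsub (hIcc ⟨le_rfl, hsw.le⟩)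

theorem ContinuousWithinAt.exists_mem_skeleton {g : ℝ → ℝ} {s w t : ℝ}
    (hg : ContinuousWithinAt g (Ici s) s) (hs : 0 ≤ s) (hsw : s ≤ w) (hw : w ∈ skeleton t)
    {O : Set ℝ} (hO : O ∈ 𝓝 (g s)) : ∃ d ∈ skeleton t, s ≤ d ∧ d ≤ w ∧ g d ∈ O := by
  have := mem_closure_iff_nhdsWithin_neBot.1 (mem_closure_skeleton_inter_Icc hs hsw hw)
  have hg' : ContinuousWithinAt g (skeleton t ∩ Icc s w) s := hg.mono fun _ hd => hd.2.1
  obtain ⟨d, hdO, hd, hsd, hdw⟩ :=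
    ((hg'.tendsto.eventually_mem hO).and self_mem_nhdsWithin).exists
  exact ⟨d, hd, hsd, hdw, hdO⟩

section Pathwise

variable {Ω : Type*} {X : ℝ → Ω → ℝ} {ω : Ω} {t x y : ℝ}

theorem sub_le_drawup (hb : BddBelow ((X · ω) '' Icc 0 t)) {s : ℝ} (hs : s ∈ Icc 0 t) :
    X t ω - X s ω ≤ drawup X t ω :=
  sub_le_sub_left (csInf_le hb (mem_image_of_mem _ hs)) _

theorem lt_drawup_iff (hb : BddBelow ((X · ω) '' Icc 0 t)) (ht : 0 ≤ t) :
    y < drawup X t ω ↔ ∃ s ∈ Icc 0 t, y < X t ω - X s ω := by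
  rw [drawup, unX, lt_sub_comm, csInf_lt_iff hb ⟨_, mem_image_of_mem _ ⟨ht, le_rfl⟩⟩,
    exists_mem_image]
  simp only [lt_sub_comm]

theorem bddAbove_drawup (hb : Bornology.IsBounded ((X · ω) '' Icc 0 t)) :
    BddAbove ((drawup X · ω) '' Icc 0 t) := by
  obtain ⟨a, ha⟩ := hb.bddAbove
  obtain ⟨b, hb⟩ := hb.bddBelow
  refine ⟨a - b, ?_⟩
  rintro _ ⟨u, hu, rfl⟩
  refine sub_le_sub (ha (mem_image_of_mem _ hu))
    (le_csInf ⟨_, mem_image_of_mem _ ⟨hu.1, le_rfl⟩⟩ ?_)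
  rintro _ ⟨s, hs, rfl⟩
  exact hb (mem_image_of_mem _ ⟨hs.1, hs.2.trans hu.2⟩)

theorem lt_ovU_iff (hb : Bornology.IsBounded ((X · ω) '' Icc 0 t)) (ht : 0 ≤ t) :
    y < ovU X t ω ↔ ∃ u ∈ Icc 0 t, ∃ s ∈ Icc 0 u, y < X u ω - X s ω := by
  rw [ovU, lt_csSup_iff (bddAbove_drawup hb) ⟨_, mem_image_of_mem _ ⟨ht, le_rfl⟩⟩,
    exists_mem_image]
  exact exists_congr fun u => and_congr_right fun hu =>
    lt_drawup_iff (hb.subset (image_mono (Icc_subset_Icc_right hu.2))).bddBelow hu.1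

theorem coe_lt_futSupE_iff :
    (y : EReal) < futSupE X t ω ↔ ∃ v, t ≤ v ∧ y < X v ω - X t ω := by
  simp only [futSupE, lt_iSup_iff, EReal.coe_lt_coe_iff, Subtype.exists, exists_prop]

theorem coe_lt_ovUStarInf_iff :
    (y : EReal) < ovUStarInf X t ω ↔ ∃ s ∈ Icc 0 t, ∃ v, s ≤ v ∧ y < X v ω - X s ω := by
  simp [ovUStarInf, lt_iSup_iff, coe_lt_futSupE_iff]

theorem coe_lt_ovUStarInf_iff_ovU (hb : Bornology.IsBounded ((X · ω) '' Icc 0 t))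
    (ht : 0 ≤ t) :
    (x : EReal) < ovUStarInf X t ω
      ↔ x < ovU X t ω ∨ ((x - drawup X t ω : ℝ) : EReal) < futSupE X t ω := by
  rw [coe_lt_ovUStarInf_iff, lt_ovU_iff hb ht, coe_lt_futSupE_iff]
  constructor
  · rintro ⟨s, hs, v, hsv, hv⟩
    rcases le_total v t with hvt | htv
    · exact Or.inl ⟨v, ⟨hs.1.trans hsv, hvt⟩, s, ⟨hs.1, hsv⟩, hv⟩
    · exact Or.inr ⟨v, htv, by linarith [sub_le_drawup hb.bddBelow hs]⟩
  · rintro (⟨u, hu, s, hs, h⟩ | ⟨v, htv, hv⟩)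
    · exact ⟨s, ⟨hs.1, hs.2.trans hu.2⟩, u, hs.2, h⟩
    · obtain ⟨s, hs, h⟩ := (lt_drawup_iff hb.bddBelow ht).1
        (show x - (X v ω - X t ω) < drawup X t ω by linarith)
      exact ⟨s, hs, v, hs.2.trans htv, by linarith⟩

theorem lt_drawup_iff_skeleton (hr : ∀ s, 0 ≤ s → ContinuousWithinAt (X · ω) (Ici s) s)
    (hb : BddBelow ((X · ω) '' Icc 0 t)) (ht : 0 ≤ t) :
    y < drawup X t ω ↔ ∃ s ∈ skeleton t, y < X t ω - X s ω := by
  rw [lt_drawup_iff hb ht]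
  refine ⟨fun ⟨s, hs, h⟩ => ?_, fun ⟨s, hs, h⟩ => ⟨s, skeleton_subset_Icc ht hs, h⟩⟩
  obtain ⟨d, hd, -, -, hdy⟩ := (hr s hs.1).exists_mem_skeleton hs.1 hs.2
    (self_mem_skeleton t) (Iio_mem_nhds (show X s ω < X t ω - y by linarith))
  exact ⟨d, hd, by linarith [mem_Iio.1 hdy]⟩

theorem lt_ovU_iff_skeleton (hr : ∀ s, 0 ≤ s → ContinuousWithinAt (X · ω) (Ici s) s)
    (hb : Bornology.IsBounded ((X · ω) '' Icc 0 t)) (ht : 0 ≤ t) :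
    y < ovU X t ω ↔ ∃ u ∈ skeleton t, ∃ s ∈ skeleton t, s ≤ u ∧ y < X u ω - X s ω := by
  rw [lt_ovU_iff hb ht]
  constructor
  · rintro ⟨u, hu, s, hs, h⟩
    obtain ⟨d, hd, hud, -, hdy⟩ := (hr u hu.1).exists_mem_skeleton hu.1 hu.2
      (self_mem_skeleton t) (Ioi_mem_nhds (show y + X s ω < X u ω by linarith))
    obtain ⟨d', hd', -, hd'd, hd'y⟩ := (hr s hs.1).exists_mem_skeleton hs.1 (hs.2.trans hud)
      hd (Iio_mem_nhds (show X s ω < X d ω - y by linarith [mem_Ioi.1 hdy]))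
    exact ⟨d, hd, d', hd', hd'd, by linarith [mem_Iio.1 hd'y]⟩
  · rintro ⟨u, hu, s, hs, hsu, h⟩
    exact ⟨u, skeleton_subset_Icc ht hu, s, ⟨(skeleton_subset_Icc ht hs).1, hsu⟩, h⟩

end Pathwise

section PathFunctionals

variable {Ω : Type*} {X : ℝ → Ω → ℝ} {t : ℝ}

def pathUpTo (X : ℝ → Ω → ℝ) (t : ℝ) (ω : Ω) : Icc (0 : ℝ) t → ℝ := fun u => X u ω

def incrPath (X : ℝ → Ω → ℝ) (t : ℝ) (ω : Ω) : ℝ → ℝ := fun s => X (t + max s 0) ω - X t ω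

def supRat (f : ℝ → ℝ) : EReal := ⨆ q : ℚ, ((f q : ℝ) : EReal)

theorem measurable_supRat : Measurable supRat :=
  Measurable.iSup fun _ => measurable_coe_real_ereal.comp (measurable_pi_apply _)

theorem incrPath_zero (h0 : ∀ ω, X 0 ω = 0) : incrPath X 0 = fun ω s => X (max s 0) ω := by
  funext ω s
  simp [incrPath, h0]

theorem futSupE_eq_supRat_incrPath {ω : Ω}
    (hr : ∀ s, t ≤ s → ContinuousWithinAt (X · ω) (Ici s) s) :
    futSupE X t ω = supRat (incrPath X t ω) := by
  have hshift : ∀ s, t ≤ t + max s 0 := fun s => le_add_of_nonneg_right (le_max_right s 0)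
  have hcont :
      ∀ s, ContinuousWithinAt (fun s => ((incrPath X t ω s : ℝ) : EReal)) (Ici s) s := by
    intro s
    have hmaps : MapsTo (fun v => t + max v 0) (Ici s) (Ici (t + max s 0)) := fun v hv =>
      (add_le_add_iff_left t).2 (max_le_max_right 0 hv)
    have hshiftX : ContinuousWithinAt (fun v => X (t + max v 0) ω) (Ici s) s :=
      (hr _ (hshift s)).comp (f := fun v => t + max v 0)
        (by fun_prop : Continuous fun v : ℝ => t + max v 0).continuousWithinAt hmaps
    exact continuous_coe_real_ereal.continuousAt.comp_continuousWithinAt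
      (hshiftX.sub continuousWithinAt_const)
  rw [supRat, iSup_ratCast_eq_iSup hcont]
  refine le_antisymm (iSup_le fun ⟨v, hv⟩ => le_iSup_of_le (v - t) ?_)
    (iSup_le fun s => le_iSup_of_le (⟨t + max s 0, hshift s⟩ : {v // t ≤ v}) le_rfl)
  simp [incrPath, max_eq_left (sub_nonneg.2 hv)]

theorem MSup_eq_futSupE_zero {ω : Ω} (h0 : X 0 ω = 0) : MSup X ω = futSupE X 0 ω := by
  simp [MSup, futSupE, h0]

theorem measurable_comap_pathUpTo_drawup_ovU
    (hr : ∀ ω s, 0 ≤ s → ContinuousWithinAt (X · ω) (Ici s) s)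
    (hb : ∀ ω, Bornology.IsBounded ((X · ω) '' Icc 0 t)) (ht : 0 ≤ t) :
    Measurable[MeasurableSpace.comap (pathUpTo X t) inferInstance]
      fun ω => (drawup X t ω, ovU X t ω) := by
  let m := MeasurableSpace.comap (pathUpTo X t) inferInstance
  have hX : ∀ s ∈ skeleton t, Measurable[m] (X s) := fun s hs =>
    (measurable_pi_apply (X := fun _ : Icc (0 : ℝ) t => ℝ) ⟨s, skeleton_subset_Icc ht hs⟩).comp
      (comap_measurable (pathUpTo X t))
  have hlt : ∀ y, ∀ u ∈ skeleton t, ∀ s ∈ skeleton t,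
      MeasurableSet[m] {ω | y < X u ω - X s ω} := fun y u hu s hs =>
    measurableSet_lt measurable_const ((hX u hu).sub (hX s hs))
  refine (measurable_of_Ioi fun y => ?_).prodMk (measurable_of_Ioi fun y => ?_)
  · have : drawup X t ⁻¹' Ioi y = ⋃ s ∈ skeleton t, {ω | y < X t ω - X s ω} := by
      ext ω
      simp [lt_drawup_iff_skeleton (hr ω) (hb ω).bddBelow ht]
    rw [this]
    exact .biUnion (countable_skeleton t) fun s hs => hlt y t (self_mem_skeleton t) s hs
  · have : ovU X t ⁻¹' Ioi y =
        ⋃ u ∈ skeleton t, ⋃ s ∈ skeleton t ∩ Iic u, {ω | y < X u ω - X s ω} := by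
      ext ω
      simp only [mem_preimage, mem_Ioi, mem_iUnion, mem_inter_iff, mem_Iic, mem_ofPred_eq,
        exists_prop, lt_ovU_iff_skeleton (hr ω) (hb ω) ht, and_assoc]
    rw [this]
    exact .biUnion (countable_skeleton t) fun u hu =>
      .biUnion ((countable_skeleton t).mono inter_subset_left) fun s hs => hlt y u hu s hs.1

end PathFunctionals

namespace IsLevyProcess

variable {P : Measure Ω} {X : ℝ → Ω → ℝ} {t : ℝ}

theorem measurable_pathUpTo (hX : IsLevyProcess P X) : Measurable (pathUpTo X t) :=
  measurable_pi_lambda _ fun u => hX.measurable u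

theorem measurable_incrPath (hX : IsLevyProcess P X) : Measurable (incrPath X t) :=
  measurable_pi_lambda _ fun _ => (hX.measurable _).sub (hX.measurable t)

theorem isBounded_image_Icc (hX : IsLevyProcess P X) (ω : Ω) :
    Bornology.IsBounded ((X · ω) '' Icc 0 t) :=
  isBounded_image_of_cadlag (hX.right_cont ω) (hX.left_lim ω) isCompact_Icc fun _ h => h.1

theorem futSupE_eq (hX : IsLevyProcess P X) (ht : 0 ≤ t) : futSupE X t = supRat ∘ incrPath X t :=
  funext fun ω => futSupE_eq_supRat_incrPath fun s hs => hX.right_cont ω s (ht.trans hs)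

theorem measurable_futSupE (hX : IsLevyProcess P X) (ht : 0 ≤ t) : Measurable (futSupE X t) := by
  rw [hX.futSupE_eq ht]
  exact measurable_supRat.comp hX.measurable_incrPath

theorem measurable_drawup_ovU (hX : IsLevyProcess P X) (ht : 0 ≤ t) :
    Measurable fun ω => (drawup X t ω, ovU X t ω) :=
  (measurable_comap_pathUpTo_drawup_ovU hX.right_cont hX.isBounded_image_Icc ht).mono
    hX.measurable_pathUpTo.comap_le le_rfl

theorem indepFun_drawup_ovU_futSupE (hX : IsLevyProcess P X) (ht : 0 ≤ t) :
    IndepFun (fun ω => (drawup X t ω, ovU X t ω)) (futSupE X t) P := by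
  refine (hX.indep_incr t ht).symm.of_measurable_comap
    (measurable_comap_pathUpTo_drawup_ovU hX.right_cont hX.isBounded_image_Icc ht) ?_
  rw [hX.futSupE_eq ht]
  exact measurable_supRat.comp (comap_measurable _)

theorem identDistrib_futSupE_MSup (hX : IsLevyProcess P X) (ht : 0 ≤ t) :
    IdentDistrib (futSupE X t) (MSup X) P P := by
  have hM : MSup X = futSupE X 0 := funext fun ω => MSup_eq_futSupE_zero (hX.init ω)
  have hstat : P.map (incrPath X t) = P.map (incrPath X 0) := by
    rw [incrPath_zero hX.init]
    exact hX.stat_incr t ht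
  refine ⟨(hX.measurable_futSupE ht).aemeasurable, hM ▸ (hX.measurable_futSupE le_rfl).aemeasurable,
    ?_⟩
  rw [hM, hX.futSupE_eq ht, hX.futSupE_eq le_rfl,
    ← Measure.map_map measurable_supRat hX.measurable_incrPath,
    ← Measure.map_map measurable_supRat hX.measurable_incrPath, hstat]

end IsLevyProcess

theorem tail_decomposition_ovUStar_general
    {Ω : Type*} [MeasurableSpace Ω] (P : Measure Ω) [IsProbabilityMeasure P]
    (X : ℝ → Ω → ℝ) (hX : IsLevyProcess P X)
    (t : ℝ) (ht : 0 ≤ t) (x : ℝ) :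
    P {ω | (x : EReal) < ovUStarInf X t ω}
      = P {ω | x < ovU X t ω}
        + ∫⁻ ω in {ω | ovU X t ω ≤ x},
            P {ω' | ((x - drawup X t ω : ℝ) : EReal) < MSup X ω'} ∂P := by
  set A := fun ω => (drawup X t ω, ovU X t ω)
  set S : Set ((ℝ × ℝ) × EReal) := {p | p.1.2 ≤ x ∧ ((x - p.1.1 : ℝ) : EReal) < p.2}
  have hA : Measurable A := hX.measurable_drawup_ovU ht
  have hB : Measurable (futSupE X t) := hX.measurable_futSupE ht
  have hS : MeasurableSet S :=
    (measurableSet_le measurable_fst.snd measurable_const).inter <| measurableSet_lt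
      (measurable_coe_real_ereal.comp (measurable_const.sub measurable_fst.fst)) measurable_snd
  have hsplit : {ω | (x : EReal) < ovUStarInf X t ω}
      = {ω | x < ovU X t ω} ∪ {ω | (A ω, futSupE X t ω) ∈ S} := by
    ext ω
    simp only [mem_ofPred_eq, mem_union, S, A,
      coe_lt_ovUStarInf_iff_ovU (hX.isBounded_image_Icc ω) ht]
    rw [← not_lt]
    tauto
  have hdisj : Disjoint {ω | x < ovU X t ω} {ω | (A ω, futSupE X t ω) ∈ S} :=
    disjoint_left.2 fun _ h1 h2 => not_lt.2 h2.1 h1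
  rw [hsplit, measure_union hdisj (hA.prodMk hB hS),
    (hX.indepFun_drawup_ovU_futSupE ht).measure_mem_eq_lintegral hA hB hS,
    ← lintegral_indicator (measurableSet_le hA.snd measurable_const)]
  refine congrArg _ (lintegral_congr fun ω => ?_)
  by_cases h : ovU X t ω ≤ x
  · simp only [S, A, h, true_and, mem_ofPred_eq, indicator_of_mem]
    exact (hX.identDistrib_futSupE_MSup ht).measure_mem_eq measurableSet_Ioi
  · simp [S, A, h]

/-- **Tail decomposition identity** (equation (eq:asympp)): if `E[X_1⁺] < ∞` and the
mean of `X_1` is negative (possibly `-∞`), so that `M = sup_{s≥0} X_s` is a.s. finite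
and `F(y) = P(M > y)`, then for all `t ≥ 0` and `x ≥ 0`,
`P(\overline U^*_t > x) = P(\overline U_t > x) + E[F(x - U_t) 1_{\overline U_t ≤ x}]`. -/
theorem tail_decomposition_ovUStar
    {Ω : Type*} [MeasurableSpace Ω] (P : Measure Ω) [IsProbabilityMeasure P]
    (X : ℝ → Ω → ℝ) (hX : IsLevyProcess P X)
    (hplus : ∫⁻ ω, ENNReal.ofReal (max (X 1 ω) 0) ∂P < ⊤)
    (hmean : ∫⁻ ω, ENNReal.ofReal (max (X 1 ω) 0) ∂P
      < ∫⁻ ω, ENNReal.ofReal (max (-X 1 ω) 0) ∂P)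
    (t : ℝ) (ht : 0 ≤ t) (x : ℝ) (hx : 0 ≤ x) :
    P {ω | (x : EReal) < ovUStarInf X t ω}
      = P {ω | x < ovU X t ω}
        + ∫⁻ ω in {ω | ovU X t ω ≤ x},
            P {ω' | ((x - drawup X t ω : ℝ) : EReal) < MSup X ω'} ∂P :=
  tail_decomposition_ovUStar_general P X hX t ht x
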